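/- arXiv:1201.2149 — 2 statements merged into one kernel-verified Lean document; each statement's English description precedes it below -/
import Mathlib

section
/- Let 1 ≤ i < j ≤ n and v = (s_{n-1} s_{n-2} ⋯ s_j)(s_1 s_2 ⋯ s_{i-1}). Then under the Richardson-Springer action, v · e = (1,i)(j,n) and ℓ_(n)(v · e) = ℓ(v). -/
open Equiv

/-- Number of inversions of a permutation of `Fin n`. -/
def invNum {n : ℕ} (w : Perm (Fin n)) : ℕ :=
  (Finset.univ.filter (fun p : Fin n × Fin n => p.1 < p.2 ∧ w p.2 < w p.1)).card

/-- Number of excedances. -/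
def excNum {n : ℕ} (w : Perm (Fin n)) : ℕ :=
  (Finset.univ.filter (fun i : Fin n => i < w i)).card

/-- Rank function on involutions: ℓ_(n)(π) = (ℓ(π)+exc(π))/2. -/
def invLen {n : ℕ} (w : Perm (Fin n)) : ℕ := (invNum w + excNum w) / 2

/-- Richardson–Springer action of the simple transposition with 0-indexed index `i`. -/
def rsStep {n : ℕ} (i : ℕ) (π : Perm (Fin n)) : Perm (Fin n) :=
  if h : i + 1 < n then
    let a : Fin n := ⟨i, Nat.lt_of_succ_lt h⟩
    let b : Fin n := ⟨i + 1, h⟩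
    if π⁻¹ b < π⁻¹ a then π
    else if π a = a ∧ π b = b then Equiv.swap a b * π
    else Equiv.swap a b * π * Equiv.swap a b
  else π

/-- Action of a word of simple transpositions. -/
def rsWord {n : ℕ} (l : List ℕ) (π : Perm (Fin n)) : Perm (Fin n) :=
  l.foldr rsStep π

/-- The adjacent transposition `s_{i+1} = (i+1, i+2)` (0-indexed `i`). -/
def adjSwap (n : ℕ) (i : ℕ) : Perm (Fin n) :=
  if h : i + 1 < n then Equiv.swap ⟨i, Nat.lt_of_succ_lt h⟩ ⟨i + 1, h⟩ else 1

/-- `l` is a reduced word for `w`. -/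
def IsReducedWord {n : ℕ} (l : List ℕ) (w : Perm (Fin n)) : Prop :=
  (∀ i ∈ l, i + 1 < n) ∧ (l.map (adjSwap n)).prod = w ∧ l.length = invNum w

/-- The "mirror" value `n+1-i` in 0-indexed terms. -/
def mir {n : ℕ} (i : Fin n) : Fin n := ⟨n - 1 - (i : ℕ), by have := i.isLt; omega⟩

/-- The set `D_n`. -/
def Dset (n : ℕ) : Set (Perm (Fin n)) :=
  {w | ∀ i : Fin n, 2 * (i : ℕ) + 1 < n →
    w⁻¹ (mir i) < w⁻¹ i ∧
    ∀ j : Fin n, (i : ℕ) < (j : ℕ) → (j : ℕ) < n - 1 - (i : ℕ) →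
      ¬(w⁻¹ (mir i) < w⁻¹ j ∧ w⁻¹ j < w⁻¹ i)}

/-- One-line notation (1-indexed values) of a permutation. -/
def oneLine {n : ℕ} (w : Perm (Fin n)) : List ℕ := List.ofFn fun k => (w k : ℕ) + 1

/-! Read from the right, the word first lets `s_{i-1}` turn the fixed pair `i-1, i` into the
transposition `(i-1,i)`, and each further `s_k` with `k < i-1` conjugates, moving the left end
down until `(1,i)` is reached; then `s_j` creates `(j,j+1)`, which `s_{j+1}, …, s_{n-1}` push up
to `(j,n)` without touching `(1,i)`. For the lengths, the inversions of `v` are listed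
explicitly: there are `(i-1) + (n-j)` of them. A transposition `(a,b)` with `a < b` has
`2(b-a)-1` inversions and one excedance, and `(1,i)(j,n)` has no inversions across its two
factors, so `ℓ + exc` of `(1,i)(j,n)` is `2(i-1) + 2(n-j)`. -/

section RichardsonSpringer

variable {n : ℕ}

lemma rsWord_append (l₁ l₂ : List ℕ) (π : Perm (Fin n)) :
    rsWord (l₁ ++ l₂) π = rsWord l₁ (rsWord l₂ π) :=
  List.foldr_append

lemma rsStep_of_fixed (i : ℕ) (h : i + 1 < n) (π : Perm (Fin n))
    (ha : π ⟨i, by omega⟩ = ⟨i, by omega⟩) (hb : π ⟨i + 1, h⟩ = ⟨i + 1, h⟩) :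
    rsStep i π = swap ⟨i, by omega⟩ ⟨i + 1, h⟩ * π := by
  have ha' : π⁻¹ ⟨i, by omega⟩ = ⟨i, by omega⟩ := Perm.inv_eq_iff_eq.2 ha.symm
  have hb' : π⁻¹ ⟨i + 1, h⟩ = ⟨i + 1, h⟩ := Perm.inv_eq_iff_eq.2 hb.symm
  simp [rsStep, h, ha, hb, ha', hb']

lemma rsStep_of_lt_of_not_fixed (i : ℕ) (h : i + 1 < n) (π : Perm (Fin n))
    (hlt : π⁻¹ ⟨i, by omega⟩ < π⁻¹ ⟨i + 1, h⟩)
    (hfix : ¬(π ⟨i, by omega⟩ = ⟨i, by omega⟩ ∧ π ⟨i + 1, h⟩ = ⟨i + 1, h⟩)) :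
    rsStep i π = swap ⟨i, by omega⟩ ⟨i + 1, h⟩ * π * swap ⟨i, by omega⟩ ⟨i + 1, h⟩ := by
  simp only [rsStep, dif_pos h, if_neg hlt.asymm, if_neg hfix]

lemma rsStep_swap_succ (m b : ℕ) (hb : b < n) (hmb : m < b) :
    rsStep m (swap ⟨m + 1, by omega⟩ ⟨b, hb⟩) = swap ⟨m, by omega⟩ ⟨b, hb⟩ := by
  rcases (Nat.succ_le_of_lt hmb).eq_or_lt with rfl | hlt
  · rw [swap_self, ← Perm.one_def, rsStep_of_fixed m hb 1 rfl rfl, mul_one]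
  · have hm : (⟨m, by omega⟩ : Fin n) ≠ ⟨m + 1, by omega⟩ := by simp
    have hbm : (⟨b, hb⟩ : Fin n) ≠ ⟨m, by omega⟩ := Fin.ne_of_val_ne (by dsimp only; omega)
    have hbm' : (⟨b, hb⟩ : Fin n) ≠ ⟨m + 1, by omega⟩ := Fin.ne_of_val_ne (by dsimp only; omega)
    rw [rsStep_of_lt_of_not_fixed m (by omega)]
    · rw [swap_comm (⟨m, _⟩ : Fin n), swap_comm (⟨m + 1, _⟩ : Fin n) ⟨b, hb⟩,
        swap_mul_swap_mul_swap hbm' hbm]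
    · rw [swap_inv, swap_apply_left, swap_apply_of_ne_of_ne hm hbm.symm]
      exact Fin.mk_lt_mk.2 (by omega)
    · rw [swap_apply_left]; exact fun h => hbm' h.2

lemma rsWord_range_swap (b : ℕ) (hb : b < n) :
    ∀ m (hm : m ≤ b), rsWord (List.range m) (swap ⟨m, by omega⟩ ⟨b, hb⟩)
      = swap ⟨0, by omega⟩ ⟨b, hb⟩
  | 0, _ => rfl
  | m + 1, hm => by
    rw [List.range_succ, rsWord_append]
    exact (congrArg _ (rsStep_swap_succ m b hb hm)).trans (rsWord_range_swap b hb m (by omega))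

lemma rsStep_mul_swap (σ : Perm (Fin n)) (J a : ℕ) (hJa : J ≤ a) (ha : a + 1 < n)
    (hσ : ∀ x : Fin n, J ≤ (x : ℕ) → σ x = x) :
    rsStep a (σ * swap ⟨J, by omega⟩ ⟨a, by omega⟩) = σ * swap ⟨J, by omega⟩ ⟨a + 1, ha⟩ := by
  have hσa := hσ ⟨a, by omega⟩ hJa
  have hσa' := hσ ⟨a + 1, ha⟩ (by dsimp only; omega)
  have hcomm : σ * swap ⟨a, by omega⟩ ⟨a + 1, ha⟩ = swap ⟨a, by omega⟩ ⟨a + 1, ha⟩ * σ := by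
    rw [mul_swap_eq_swap_mul, hσa, hσa']
  rcases hJa.eq_or_lt with rfl | hlt
  · rw [swap_self, ← Perm.one_def, mul_one, rsStep_of_fixed J ha σ hσa hσa', hcomm]
  · have hJa : (⟨J, by omega⟩ : Fin n) ≠ ⟨a, by omega⟩ := Fin.ne_of_val_ne (by dsimp only; omega)
    have hJa' : (⟨J, by omega⟩ : Fin n) ≠ ⟨a + 1, ha⟩ := Fin.ne_of_val_ne (by dsimp only; omega)
    have hσJ := hσ ⟨J, by omega⟩ le_rfl
    rw [rsStep_of_lt_of_not_fixed a ha]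
    · simp only [mul_assoc]
      rw [← mul_assoc _ σ, ← hcomm, mul_assoc σ, ← mul_assoc _ _ (swap _ _),
        swap_mul_swap_mul_swap hJa hJa', swap_comm]
    · rw [mul_inv_rev, swap_inv, Perm.mul_apply, Perm.mul_apply, Perm.inv_eq_iff_eq.2 hσa.symm,
        Perm.inv_eq_iff_eq.2 hσa'.symm, swap_apply_right, swap_apply_of_ne_of_ne hJa'.symm]
      · exact Fin.mk_lt_mk.2 (by omega)
      · exact Fin.ne_of_val_ne (by dsimp only; omega)
    · rw [Perm.mul_apply, swap_apply_right, hσJ]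
      exact fun h => hJa h.1

lemma rsWord_range'_reverse_mul_swap (σ : Perm (Fin n)) (J a : ℕ) (hJa : J ≤ a)
    (hσ : ∀ x : Fin n, J ≤ (x : ℕ) → σ x = x) :
    ∀ t (ht : a + t < n), rsWord (List.range' a t).reverse (σ * swap ⟨J, by omega⟩ ⟨a, by omega⟩)
      = σ * swap ⟨J, by omega⟩ ⟨a + t, ht⟩
  | 0, _ => rfl
  | t + 1, ht => by
    rw [List.range'_concat, List.reverse_append, rsWord_append,
      rsWord_range'_reverse_mul_swap σ J a hJa hσ t (by omega), Nat.one_mul]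
    exact rsStep_mul_swap σ J (a + t) (by omega) ht hσ

lemma rsWord_range'_reverse_append_range (I J : ℕ) (hIJ : I < J) (hJn : J < n) :
    rsWord ((List.range' J (n - 1 - J)).reverse ++ List.range I) (1 : Perm (Fin n))
      = swap ⟨0, by omega⟩ ⟨I, by omega⟩ * swap ⟨J, hJn⟩ ⟨n - 1, by omega⟩ := by
  have hfirst := rsWord_range_swap (n := n) I (by omega) I le_rfl
  rw [swap_self, ← Perm.one_def] at hfirst
  set σ : Perm (Fin n) := swap ⟨0, by omega⟩ ⟨I, by omega⟩
  have hσ (x : Fin n) (hx : J ≤ (x : ℕ)) : σ x = x :=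
    swap_apply_of_ne_of_ne (Fin.ne_of_val_ne (by dsimp only; omega))
      (Fin.ne_of_val_ne (by dsimp only; omega))
  have hsecond := rsWord_range'_reverse_mul_swap σ J J le_rfl hσ (n - 1 - J)
    (show J + (n - 1 - J) < n by omega)
  rw [swap_self, ← Perm.one_def, mul_one] at hsecond
  rw [rsWord_append, hfirst, hsecond]
  congr 3
  omega

end RichardsonSpringer

section Counting

open Finset

variable {n : ℕ}

lemma prod_map_adjSwap_range_apply :
    ∀ m, m < n → ∀ x : Fin n, ((((List.range m).map (adjSwap n)).prod x : Fin n) : ℕ)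
      = if (x : ℕ) < m then (x : ℕ) + 1 else if (x : ℕ) = m then 0 else x
  | 0, _, x => by
    simp only [List.range_zero, List.map_nil, List.prod_nil, Perm.one_apply]
    split_ifs <;> omega
  | m + 1, hm, x => by
    rw [List.range_succ, List.map_append, List.prod_append, Perm.mul_apply,
      prod_map_adjSwap_range_apply m (by omega)]
    simp only [List.map_cons, List.map_nil, List.prod_cons, List.prod_nil, mul_one]
    rw [adjSwap, dif_pos hm]
    simp only [swap_apply_def, apply_ite Fin.val, Fin.ext_iff]
    split_ifs <;> omega

lemma prod_map_adjSwap_range'_reverse_apply (J : ℕ) (x : Fin n) :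
    ∀ t, J + t < n → ((((List.range' J t).reverse.map (adjSwap n)).prod x : Fin n) : ℕ)
      = if (x : ℕ) = J then J + t else if J < (x : ℕ) ∧ (x : ℕ) ≤ J + t then (x : ℕ) - 1 else x
  | 0, _ => by
    simp only [List.range'_zero, List.reverse_nil, List.map_nil, List.prod_nil, Perm.one_apply]
    split_ifs <;> omega
  | t + 1, ht => by
    rw [List.range'_concat, List.reverse_append, List.map_append, List.prod_append,
      Perm.mul_apply, Nat.one_mul]
    simp only [List.reverse_singleton, List.map_cons, List.map_nil, List.prod_cons,
      List.prod_nil, mul_one]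
    rw [adjSwap, dif_pos (by omega)]
    simp only [swap_apply_def, apply_ite Fin.val, Fin.ext_iff]
    rw [prod_map_adjSwap_range'_reverse_apply J x t (by omega)]
    split_ifs <;> omega

lemma invNum_prod_map_adjSwap (I J : ℕ) (hIJ : I < J) (hJn : J < n) :
    invNum ((((List.range' J (n - 1 - J)).reverse ++ List.range I).map (adjSwap n)).prod)
      = I + (n - 1 - J) := by
  set v := (((List.range' J (n - 1 - J)).reverse ++ List.range I).map (adjSwap n)).prod
  have hv (x : Fin n) : (v x : ℕ) = if (x : ℕ) < I then (x : ℕ) + 1 else if (x : ℕ) = I then 0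
      else if (x : ℕ) = J then n - 1 else if J < (x : ℕ) then (x : ℕ) - 1 else x := by
    simp only [v]
    rw [List.map_append, List.prod_append, Perm.mul_apply,
      prod_map_adjSwap_range'_reverse_apply J _ _ (by omega),
      prod_map_adjSwap_range_apply I (by omega)]
    split_ifs <;> omega
  set b : Fin n := ⟨I, by omega⟩
  set c : Fin n := ⟨J, hJn⟩
  have hinv : univ.filter (fun p : Fin n × Fin n => p.1 < p.2 ∧ v p.2 < v p.1)
      = Iio b ×ˢ {b} ∪ {c} ×ˢ Ioi c := by
    ext ⟨p, q⟩
    have := p.isLt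
    have := q.isLt
    simp only [mem_filter, mem_univ, true_and, mem_union, mem_product, mem_singleton, mem_Iio,
      mem_Ioi, Fin.lt_def, Fin.ext_iff, hv, b, c]
    split_ifs <;> omega
  rw [invNum, hinv, card_union_of_disjoint]
  · simp only [card_product, card_singleton, Fin.card_Iio, Fin.card_Ioi, b, c]
    omega
  · simp only [disjoint_left, mem_product, mem_singleton, mem_Iio, mem_Ioi, Fin.lt_def,
      Fin.ext_iff, b, c]
    omega

lemma invNum_swap_mul_swap (I J : ℕ) (hIJ : I < J) (hJn : J < n) :
    invNum (swap ⟨0, by omega⟩ ⟨I, by omega⟩ * swap ⟨J, hJn⟩ ⟨n - 1, by omega⟩ : Perm (Fin n))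
      = I + (I - 1) + (n - 1 - J) + (n - 1 - J - 1) := by
  set w : Perm (Fin n) := swap ⟨0, by omega⟩ ⟨I, by omega⟩ * swap ⟨J, hJn⟩ ⟨n - 1, by omega⟩
  have hw (x : Fin n) : (w x : ℕ) = if (x : ℕ) = 0 then I else if (x : ℕ) = I then 0
      else if (x : ℕ) = J then n - 1 else if (x : ℕ) = n - 1 then J else x := by
    simp only [w, Perm.mul_apply, swap_apply_def, apply_ite Fin.val, Fin.ext_iff]
    split_ifs <;> omega
  set a : Fin n := ⟨0, by omega⟩
  set b : Fin n := ⟨I, by omega⟩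
  set c : Fin n := ⟨J, hJn⟩
  set d : Fin n := ⟨n - 1, by omega⟩
  have hinv : univ.filter (fun p : Fin n × Fin n => p.1 < p.2 ∧ w p.2 < w p.1)
      = {a} ×ˢ Ioc a b ∪ Ioo a b ×ˢ {b} ∪ {c} ×ˢ Ioi c ∪ Ioo c d ×ˢ {d} := by
    ext ⟨p, q⟩
    have := p.isLt
    have := q.isLt
    simp only [mem_filter, mem_univ, true_and, mem_union, mem_product, mem_singleton, mem_Ioc,
      mem_Ioo, mem_Ioi, Fin.lt_def, Fin.le_def, Fin.ext_iff, hw, a, b, c, d]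
    split_ifs <;> omega
  rw [invNum, hinv, card_union_of_disjoint, card_union_of_disjoint, card_union_of_disjoint]
  · simp only [card_product, card_singleton, Fin.card_Ioc, Fin.card_Ioo, Fin.card_Ioi, a, b, c, d]
    omega
  all_goals
    simp only [disjoint_left, mem_union, mem_product, mem_singleton, mem_Ioc, mem_Ioo, mem_Ioi,
      Fin.lt_def, Fin.le_def, Fin.ext_iff, a, b, c, d]
    omega

lemma excNum_swap_mul_swap (I J : ℕ) (hIJ : I < J) (hJn : J < n) :
    excNum (swap ⟨0, by omega⟩ ⟨I, by omega⟩ * swap ⟨J, hJn⟩ ⟨n - 1, by omega⟩ : Perm (Fin n))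
      = (if 0 < I then 1 else 0) + (if J < n - 1 then 1 else 0) := by
  set w : Perm (Fin n) := swap ⟨0, by omega⟩ ⟨I, by omega⟩ * swap ⟨J, hJn⟩ ⟨n - 1, by omega⟩
  have hexc : univ.filter (fun x : Fin n => x < w x)
      = (if 0 < I then {⟨0, by omega⟩} else ∅) ∪ (if J < n - 1 then {⟨J, hJn⟩} else ∅) := by
    ext x
    simp only [w, mem_filter, mem_univ, true_and, mem_union, Fin.lt_def, Perm.mul_apply,
      swap_apply_def, apply_ite Fin.val, Fin.ext_iff]
    split_ifs <;> simp [Fin.ext_iff] <;> omega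
  rw [excNum, hexc, card_union_of_disjoint]
  · split_ifs <;> simp
  · split_ifs <;> simp [Fin.ext_iff]; omega

lemma invLen_swap_mul_swap (I J : ℕ) (hIJ : I < J) (hJn : J < n) :
    invLen (swap ⟨0, by omega⟩ ⟨I, by omega⟩ * swap ⟨J, hJn⟩ ⟨n - 1, by omega⟩ : Perm (Fin n))
      = I + (n - 1 - J) := by
  rw [invLen, invNum_swap_mul_swap I J hIJ hJn, excNum_swap_mul_swap I J hIJ hJn]
  split_ifs <;> omega

end Counting

/-- for `1 ≤ i < j ≤ n` and `v = (s_{n-1}⋯s_j)(s_1⋯s_{i-1})`,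
one has `v · e = (1,i)(j,n)` and `ℓ_(n)(v·e) = ℓ(v)`. -/
theorem rsWord_case_two_cycles (n i j : ℕ) (h1 : 1 ≤ i) (h2 : i < j) (h3 : j ≤ n) :
    rsWord ((List.range' (j - 1) (n - j)).reverse ++ List.range (i - 1)) (1 : Perm (Fin n))
      = Equiv.swap ⟨0, by omega⟩ ⟨i - 1, by omega⟩ *
        Equiv.swap ⟨j - 1, by omega⟩ ⟨n - 1, by omega⟩ ∧
    invLen (rsWord ((List.range' (j - 1) (n - j)).reverse ++ List.range (i - 1))
        (1 : Perm (Fin n)))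
      = invNum ((((List.range' (j - 1) (n - j)).reverse ++ List.range (i - 1)).map
          (adjSwap n)).prod) := by
  have hIJ : i - 1 < j - 1 := by omega
  have hJn : j - 1 < n := by omega
  rw [show n - j = n - 1 - (j - 1) by omega,
    rsWord_range'_reverse_append_range (i - 1) (j - 1) hIJ hJn,
    invLen_swap_mul_swap (i - 1) (j - 1) hIJ hJn, invNum_prod_map_adjSwap (i - 1) (j - 1) hIJ hJn]
  exact ⟨rfl, rfl⟩
end

section
/- For the Richardson-Springer action of a permutation w on an involution π (defined via any reduced expression of w), one has ℓ_(n)(w · π) ≤ ℓ_(n)(π) + ℓ(w). -/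
open Equiv

/-!
Each letter `s = (i, i+1)` of the word sends the involution `π` to `π`, to `s π` (when `π` fixes
`i` and `i+1`, so that `s π` is again an involution), or to `s π s`. Multiplying by an adjacent
transposition on either side changes the inversion number by at most one, `s π` has at most one
more excedance than `π`, and conjugation preserves the number of excedances of an involution,
since twice that number is the size of its support. Hence `ℓ + exc` grows by at most `2` per
letter, and a reduced word of `w` has `ℓ(w)` letters.
-/

open Finset

theorem CovBy.lt_or_eq_of_swap_lt_swap {α : Type*} [LinearOrder α] {a b u v : α} (hab : a ⋖ b)
    (h : swap a b u < swap a b v) : u < v ∨ u = b ∧ v = a := by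
  have := hab.lt
  have := @hab.2
  rw [swap_apply_def, swap_apply_def] at h
  split_ifs at h <;> subst_vars <;> grind

variable {n : ℕ}

theorem invNum_inv (σ : Perm (Fin n)) : invNum σ⁻¹ = invNum σ := by
  refine card_nbij' (fun p ↦ (σ⁻¹ p.2, σ⁻¹ p.1)) (fun p ↦ (σ p.2, σ p.1)) ?_ ?_ ?_ ?_ <;>
    simp +contextual [Set.MapsTo, Set.LeftInvOn]

theorem invNum_swap_mul_le {a b : Fin n} (hab : a ⋖ b) (σ : Perm (Fin n)) :
    invNum (swap a b * σ) ≤ invNum σ + 1 := by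
  refine (card_le_card fun p hp ↦ ?_).trans (card_insert_le (σ⁻¹ a, σ⁻¹ b) _)
  simp only [mem_filter, mem_univ, true_and, mem_insert] at hp ⊢
  rw [Perm.mul_apply, Perm.mul_apply] at hp
  rcases hab.lt_or_eq_of_swap_lt_swap hp.2 with h | ⟨h2, h1⟩
  · exact Or.inr ⟨hp.1, h⟩
  · left; ext <;> simp [← h1, ← h2]

theorem invNum_mul_swap_le {a b : Fin n} (hab : a ⋖ b) (σ : Perm (Fin n)) :
    invNum (σ * swap a b) ≤ invNum σ + 1 := by
  rw [← invNum_inv, mul_inv_rev, swap_inv, ← invNum_inv σ]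
  exact invNum_swap_mul_le hab σ⁻¹

theorem invNum_swap_mul_swap_le {a b : Fin n} (hab : a ⋖ b) (σ : Perm (Fin n)) :
    invNum (swap a b * σ * swap a b) ≤ invNum σ + 2 :=
  (invNum_mul_swap_le hab _).trans (by have := invNum_swap_mul_le hab σ; omega)

theorem two_mul_excNum {σ : Perm (Fin n)} (hσ : σ * σ = 1) : 2 * excNum σ = #σ.support := by
  have hinv : ∀ x, σ (σ x) = x := fun x ↦ by rw [← Perm.mul_apply, hσ, Perm.one_apply]
  have hdesc : #{i | σ i < i} = excNum σ :=
    card_nbij' σ σ (by simp [Set.MapsTo, hinv]) (by simp [Set.MapsTo, hinv])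
      (by simp [Set.LeftInvOn, hinv]) (by simp [Set.LeftInvOn, hinv])
  have hsupp : σ.support = univ.filter (fun i ↦ i < σ i) ∪ univ.filter (fun i ↦ σ i < i) := by
    ext i; simp [lt_or_lt_iff_ne, eq_comm]
  rw [hsupp, card_union_of_disjoint, hdesc, excNum, two_mul]
  exact disjoint_filter.2 fun i _ h1 h2 ↦ lt_asymm h1 h2

theorem conj_mul_self {σ : Perm (Fin n)} (hσ : σ * σ = 1) (τ : Perm (Fin n)) :
    τ * σ * τ⁻¹ * (τ * σ * τ⁻¹) = 1 :=
  calc _ = τ * (σ * σ) * τ⁻¹ := by group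
    _ = 1 := by rw [hσ]; group

theorem excNum_conj {σ : Perm (Fin n)} (hσ : σ * σ = 1) (τ : Perm (Fin n)) :
    excNum (τ * σ * τ⁻¹) = excNum σ := by
  have := two_mul_excNum (conj_mul_self hσ τ)
  rw [Perm.card_support_conj, ← two_mul_excNum hσ] at this
  omega

theorem excNum_swap_mul_le {a b : Fin n} (hab : a < b) {σ : Perm (Fin n)} (ha : σ a = a)
    (hb : σ b = b) : excNum (swap a b * σ) ≤ excNum σ + 1 := by
  refine (card_le_card fun i hi ↦ ?_).trans (card_insert_le a _)
  simp only [mem_filter, mem_univ, true_and, mem_insert] at hi ⊢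
  rw [Perm.mul_apply] at hi
  by_cases hia : i = a
  · exact Or.inl hia
  by_cases hib : i = b
  · subst hib; simp [hb, hab.not_gt] at hi
  have hσia : σ i ≠ a := by rwa [← ha, σ.injective.ne_iff]
  have hσib : σ i ≠ b := by rwa [← hb, σ.injective.ne_iff]
  rw [swap_apply_of_ne_of_ne hσia hσib] at hi
  exact Or.inr hi

theorem swap_mul_mul_self {a b : Fin n} {σ : Perm (Fin n)} (hσ : σ * σ = 1) (ha : σ a = a)
    (hb : σ b = b) : swap a b * σ * (swap a b * σ) = 1 := by
  have hcomm : σ * swap a b = swap a b * σ := by rw [mul_swap_eq_swap_mul, ha, hb]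
  rw [mul_assoc, ← mul_assoc σ, hcomm, mul_assoc, hσ, mul_one, swap_mul_self]

theorem rsStep_mul_self (i : ℕ) {π : Perm (Fin n)} (hπ : π * π = 1) :
    rsStep i π * rsStep i π = 1 := by
  dsimp only [rsStep]
  split_ifs with _ _ hfix
  · exact hπ
  · exact swap_mul_mul_self hπ hfix.1 hfix.2
  · simpa [swap_inv] using conj_mul_self hπ (swap _ _)
  · exact hπ

theorem rsStep_le (i : ℕ) {π : Perm (Fin n)} (hπ : π * π = 1) :
    invNum (rsStep i π) + excNum (rsStep i π) ≤ invNum π + excNum π + 2 := by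
  dsimp only [rsStep]
  split_ifs with hi _ hfix
  · omega
  · have hab : (⟨i, Nat.lt_of_succ_lt hi⟩ : Fin n) ⋖ ⟨i + 1, hi⟩ := by simp
    have := invNum_swap_mul_le hab π
    have := excNum_swap_mul_le hab.lt hfix.1 hfix.2
    omega
  · have hab : (⟨i, Nat.lt_of_succ_lt hi⟩ : Fin n) ⋖ ⟨i + 1, hi⟩ := by simp
    have := invNum_swap_mul_swap_le hab π
    have := excNum_conj hπ (swap ⟨i, Nat.lt_of_succ_lt hi⟩ ⟨i + 1, hi⟩)
    rw [swap_inv] at this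
    omega
  · omega

theorem rsWord_cons (i : ℕ) (l : List ℕ) (π : Perm (Fin n)) :
    rsWord (i :: l) π = rsStep i (rsWord l π) :=
  rfl

theorem rsWord_mul_self (l : List ℕ) {π : Perm (Fin n)} (hπ : π * π = 1) :
    rsWord l π * rsWord l π = 1 := by
  induction l with
  | nil => exact hπ
  | cons i l ih => rw [rsWord_cons]; exact rsStep_mul_self i ih

theorem rsWord_le (l : List ℕ) {π : Perm (Fin n)} (hπ : π * π = 1) :
    invNum (rsWord l π) + excNum (rsWord l π) ≤ invNum π + excNum π + 2 * l.length := by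
  induction l with
  | nil => simp [rsWord]
  | cons i l ih =>
    have := rsStep_le i (rsWord_mul_self l hπ)
    rw [rsWord_cons, List.length_cons]
    omega

/-- `ℓ_(n)(w · π) ≤ ℓ_(n)(π) + ℓ(w)` for any reduced word of `w`. -/
theorem invLen_rsWord_le (n : ℕ) (π : Perm (Fin n)) (hπ : π * π = 1)
    (w : Perm (Fin n)) (l : List ℕ) (hl : IsReducedWord l w) :
    invLen (rsWord l π) ≤ invLen π + invNum w := by
  have := rsWord_le l hπ
  rw [← hl.2.2]
  unfold invLen
  omega
end
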